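/- arXiv:1301.1424 — 3 statements merged into one kernel-verified Lean document; each statement's English description precedes it below -/
import Mathlib

section
/- Let K be a field of characteristic p and L = K(α_1, ..., α_n) with each α_i^p - α_i = f_i ∈ K, such that [L:K] = p^n (i.e., {α_1,...,α_n} is an AS-basis). If γ ∈ L satisfies γ^p - γ ∈ K, then γ = a_1 α_1 + ... + a_n α_n + x for some a_1, ..., a_n ∈ F_p and x ∈ K. -/
/-!
Adjoining roots of Artin–Schreier polynomials `X ^ p - X - c` (which are separable and split as
soon as they have one root) gives a Galois extension. If `y ^ p - y ∈ K` and `σ ∈ Gal(L/K)`, then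
`σ y - y` is fixed by Frobenius, so it lies in `𝔽_p`, and `σ ↦ σ y - y` is an additive character
of the Galois group. The characters of the `α i` embed `Gal(L/K)` into `𝔽_p ^ n`; since
`|Gal(L/K)| = [L : K] = p ^ n` this is an isomorphism, so the character of `γ` is an
`𝔽_p`-linear combination `∑ aᵢ` of those of the `α i`. Then `γ - ∑ aᵢ α i` is fixed by the
Galois group, hence lies in `K`.
-/

open Polynomial Finset

section CharP

variable (p : ℕ) {L : Type*} [Field L] [CharP L p]

theorem separable_X_pow_char_sub_X_sub_C (c : L) : (X ^ p - X - C c : L[X]).Separable := by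
  refine ⟨0, -1, ?_⟩
  rw [derivative_sub, derivative_sub, derivative_X_pow, derivative_X, derivative_C,
    C_eq_natCast, CharP.cast_eq_zero L[X] p]
  ring

variable [Fact p.Prime]

theorem exists_castHom_eq_of_pow_eq_self {d : L} (hd : d ^ p = d) :
    ∃ a : ZMod p, ZMod.castHom dvd_rfl L a = d := by
  rw [← RingHom.mem_fieldRange, ZMod.fieldRange_castHom_eq_bot p]
  exact (Subfield.mem_bot_iff_pow_eq_self L p).mpr hd

theorem splits_X_pow_char_sub_X_sub_C (β : L) : (X ^ p - X - C (β ^ p - β) : L[X]).Splits := by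
  have hsplit : (X ^ p - X : L[X]).Splits := by
    simpa using (Subfield.splits_bot L p).map (⊥ : Subfield L).subtype
  have hcomp : (X ^ p - X - C (β ^ p - β) : L[X]) = (X ^ p - X : L[X]).comp (X - C β) := by
    rw [sub_comp, pow_comp, X_comp, sub_pow_char, C_sub, C_pow]
    ring
  exact hcomp ▸ hsplit.comp_X_sub_C β

end CharP

section ArtinSchreierExtension

variable (p : ℕ) [Fact p.Prime] {K L : Type*} [Field K] [Field L] [Algebra K L] [CharP K p]
  {ι : Type*} [Fintype ι] {α : ι → L} {f : ι → K}
  (hAS : ∀ i, α i ^ p - α i = algebraMap K L (f i)) (hgen : Algebra.adjoin K (Set.range α) = ⊤)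
include hAS hgen

theorem isSplittingField_prod_X_pow_char_sub_X_sub_C :
    IsSplittingField K L (∏ i, (X ^ p - X - C (f i))) := by
  have : CharP L p := charP_of_injective_algebraMap (algebraMap K L).injective p
  refine ⟨?_, ?_⟩
  · rw [Polynomial.map_prod]
    refine Splits.prod fun i _ => ?_
    simpa [hAS i] using splits_X_pow_char_sub_X_sub_C p (α i)
  · rw [eq_top_iff, ← hgen]
    refine Algebra.adjoin_mono (Set.range_subset_iff.2 fun i => ?_)
    rw [mem_rootSet, map_prod]
    refine ⟨prod_ne_zero_iff.2 fun j _ => (separable_X_pow_char_sub_X_sub_C p (f j)).ne_zero,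
      prod_eq_zero (mem_univ i) ?_⟩
    simp [hAS i]

theorem isGalois_of_adjoin_eq_top_of_artinSchreier : IsGalois K L := by
  have := isSplittingField_prod_X_pow_char_sub_X_sub_C p hAS hgen
  have : Normal K L := .of_isSplittingField (∏ i, (X ^ p - X - C (f i)))
  have : Algebra.IsSeparable K L := by
    rw [← separableClosure.eq_top_iff, eq_top_iff,
      ← IntermediateField.toSubalgebra_le_toSubalgebra, IntermediateField.top_toSubalgebra, ← hgen]
    refine Algebra.adjoin_le (Set.range_subset_iff.2 fun i => ?_)
    refine (separable_X_pow_char_sub_X_sub_C p (f i)).of_dvd (minpoly.dvd K (α i) ?_)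
    simp [hAS i]
  exact ⟨⟩

end ArtinSchreierExtension

theorem ZMod.exists_eq_sum_mul_of_bijective {G ι : Type*} [Mul G] [Fintype ι] {n : ℕ}
    (c : G → ι → ZMod n) (hc : Function.Bijective c) (hc_mul : ∀ σ τ, c (σ * τ) = c σ + c τ)
    (χ : G → ZMod n) (hχ_mul : ∀ σ τ, χ (σ * τ) = χ σ + χ τ) :
    ∃ a : ι → ZMod n, ∀ σ, χ σ = ∑ i, a i * c σ i := by
  classical
  let e := Equiv.ofBijective c hc
  have he_symm_add (v w) : e.symm (v + w) = e.symm v * e.symm w :=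
    e.injective <| by
      rw [e.apply_symm_apply]
      change v + w = c (e.symm v * e.symm w)
      rw [hc_mul]
      exact congr_arg₂ (· + ·) (e.apply_symm_apply v).symm (e.apply_symm_apply w).symm
  let φ : (ι → ZMod n) →+ ZMod n :=
    AddMonoidHom.mk' (χ ∘ e.symm) fun v w => by simp only [Function.comp, he_symm_add, hχ_mul]
  refine ⟨fun i => φ fun j => if i = j then 1 else 0, fun σ => ?_⟩
  calc χ σ = φ.toZModLinearMap n (c σ) := by simp [φ, e]
    _ = ∑ i, (φ fun j => if i = j then 1 else 0) * c σ i := by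
      rw [LinearMap.pi_apply_eq_sum_univ]
      simp [mul_comm]

section ArtinSchreierShift

variable (p : ℕ) {K L : Type*} [Field K] [Field L] [Algebra K L] [CharP L p]

/-- `σ y - y` read back in `𝔽_p`; this is meaningful only when `y ^ p - y ∈ K`, otherwise
`Function.invFun` returns a junk value. -/
noncomputable def artinSchreierShift (y : L) (σ : L ≃ₐ[K] L) : ZMod p :=
  Function.invFun (ZMod.castHom dvd_rfl L) (σ y - y)

theorem AlgEquiv.apply_castHom (σ : L ≃ₐ[K] L) (a : ZMod p) :
    σ (ZMod.castHom dvd_rfl L a) = ZMod.castHom dvd_rfl L a :=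
  RingHom.congr_fun (RingHom.ext_zmod ((σ : L →+* L).comp (ZMod.castHom dvd_rfl L)) _) a

variable {p} [Fact p.Prime] {y : L}

theorem apply_eq_add_artinSchreierShift (hy : y ^ p - y ∈ (algebraMap K L).range)
    (σ : L ≃ₐ[K] L) :
    σ y = y + ZMod.castHom dvd_rfl L (artinSchreierShift p y σ) := by
  obtain ⟨x, hx⟩ := hy
  have hy_pow : y ^ p = y + algebraMap K L x := by rw [hx]; ring
  have hfrob : (σ y - y) ^ p = σ y - y := by
    rw [sub_pow_char, ← map_pow, hy_pow, map_add, AlgEquiv.commutes]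
    ring
  rw [artinSchreierShift, Function.invFun_eq (exists_castHom_eq_of_pow_eq_self p hfrob)]
  ring

theorem artinSchreierShift_mul (hy : y ^ p - y ∈ (algebraMap K L).range) (σ τ : L ≃ₐ[K] L) :
    artinSchreierShift p y (σ * τ) = artinSchreierShift p y σ + artinSchreierShift p y τ := by
  apply (ZMod.castHom dvd_rfl L).injective
  have h := apply_eq_add_artinSchreierShift hy (σ * τ)
  rw [AlgEquiv.mul_apply, apply_eq_add_artinSchreierShift hy τ, map_add,
    apply_eq_add_artinSchreierShift hy σ, AlgEquiv.apply_castHom] at h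
  rw [map_add]
  linear_combination h.symm

theorem injective_artinSchreierShift {ι : Type*} {α : ι → L}
    (hα : ∀ i, α i ^ p - α i ∈ (algebraMap K L).range)
    (hgen : Algebra.adjoin K (Set.range α) = ⊤) :
    Function.Injective fun (σ : L ≃ₐ[K] L) i => artinSchreierShift p (α i) σ := by
  intro σ τ hστ
  refine AlgEquiv.coe_toAlgHom_injective <| AlgHom.ext_of_adjoin_eq_top hgen ?_
  rintro - ⟨i, rfl⟩
  simp only [AlgEquiv.coe_toAlgHom, apply_eq_add_artinSchreierShift (hα i), congr_fun hστ i]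

theorem apply_sub_sum_nsmul_eq_self (hy : y ^ p - y ∈ (algebraMap K L).range)
    {ι : Type*} [Fintype ι] {α : ι → L} (hα : ∀ i, α i ^ p - α i ∈ (algebraMap K L).range)
    (a : ι → ZMod p) (σ : L ≃ₐ[K] L)
    (hσ : artinSchreierShift p y σ = ∑ i, a i * artinSchreierShift p (α i) σ) :
    σ (y - ∑ i, (a i).val • α i) = y - ∑ i, (a i).val • α i := by
  have hval (b : ZMod p) (x : L) : b.val • x = ZMod.castHom dvd_rfl L b * x := by
    rw [nsmul_eq_mul, ZMod.natCast_val, ZMod.castHom_apply]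
  simp_rw [map_sub, map_sum, map_nsmul, apply_eq_add_artinSchreierShift hy,
    apply_eq_add_artinSchreierShift (hα _), hσ, hval, map_sum, map_mul, mul_add, sum_add_distrib]
  ring

end ArtinSchreierShift

/-- If `L = K(α_1,…,α_n)` with `α_i^p - α_i = f_i ∈ K` and `[L:K] = p^n`
(an AS-basis), then any `γ ∈ L` with `γ^p - γ ∈ K` has the form
`γ = a_1 α_1 + … + a_n α_n + x` with `a_i ∈ 𝔽_p`, `x ∈ K`. -/
theorem stmt2 (p : ℕ) [Fact p.Prime] {K L : Type*} [Field K] [Field L]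
    [Algebra K L] [CharP K p] (n : ℕ) (α : Fin n → L) (f : Fin n → K)
    (hAS : ∀ i, α i ^ p - α i = algebraMap K L (f i))
    (hgen : Algebra.adjoin K (Set.range α) = ⊤)
    (hdeg : Module.finrank K L = p ^ n)
    (γ : L) (hγ : γ ^ p - γ ∈ (algebraMap K L).range) :
    ∃ (a : Fin n → ZMod p) (x : K),
      γ = (∑ i, (a i).val • α i) + algebraMap K L x := by
  have : CharP L p := charP_of_injective_algebraMap (algebraMap K L).injective p
  have : FiniteDimensional K L :=
    Module.finite_of_finrank_pos (hdeg ▸ pow_pos (Fact.out : p.Prime).pos n)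
  have : IsGalois K L := isGalois_of_adjoin_eq_top_of_artinSchreier p hAS hgen
  have hα i : α i ^ p - α i ∈ (algebraMap K L).range := ⟨f i, (hAS i).symm⟩
  have hbij : Function.Bijective fun (σ : L ≃ₐ[K] L) i => artinSchreierShift p (α i) σ :=
    (injective_artinSchreierShift hα hgen).bijective_of_nat_card_le <| by
      rw [IsGalois.card_aut_eq_finrank, hdeg, Nat.card_fun, Nat.card_zmod, Nat.card_fin]
  obtain ⟨a, ha⟩ := ZMod.exists_eq_sum_mul_of_bijective _ hbij
    (fun σ τ => funext fun i => artinSchreierShift_mul (hα i) σ τ) _ (artinSchreierShift_mul hγ)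
  obtain ⟨x, hx⟩ := (IsGalois.mem_range_algebraMap_iff_fixed _).2 fun σ =>
    apply_sub_sum_nsmul_eq_self hγ hα a σ (ha σ)
  exact ⟨a, x, by rw [hx]; ring⟩
end

section
/- Let K be a field of characteristic p and f_1, ..., f_n ∈ K be such that the extensions K(α_i) with α_i^p - α_i = f_i are pairwise linearly disjoint of degree p^n in total. Then for a_1,...,a_n, b_1,...,b_n ∈ F_p with (b_1,...,b_n) ≠ 0, the equality K(a_1α_1+...+a_nα_n) = K(b_1α_1+...+b_nα_n) holds if and only if (a_1,...,a_n) = c(b_1,...,b_n) for some c ∈ F_p. -/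
/-!
The monomials `∏ i, α i ^ e i` with all `e i < p` span `L` (exponents `≥ p` are reduced with
`α i ^ p = α i + f i`), and there are `p ^ n = [L : K]` of them, so they form a `K`-basis.
For `x = ∑ aᵢ αᵢ` with `aᵢ ∈ 𝔽_p` we have `x ^ p = x + ∑ aᵢ fᵢ`, so `K[x]` is spanned by
`1, x, …, x ^ (p - 1)`; and for `k < p` the power `x ^ k` only involves monomials of total
degree `k`. Hence if `∑ aᵢ αᵢ = ∑_{k < p} r_k x ^ k` with `x = ∑ bᵢ αᵢ`, comparing the coordinates
on the degree-one monomials `αᵢ` gives `a = r₁ • b`, and `r₁ ∈ 𝔽_p` because some `bⱼ ≠ 0`.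
-/

open Finset Submodule

theorem Algebra.adjoin_le_of_one_mem_of_mul_mem {R A : Type*} [CommSemiring R] [Semiring A]
    [Algebra R A] {s : Set A} {M : Submodule R A} (h1 : (1 : A) ∈ M)
    (hmul : ∀ x ∈ s, ∀ y ∈ M, x * y ∈ M) :
    Subalgebra.toSubmodule (Algebra.adjoin R s) ≤ M := by
  intro z hz
  have hzM : ∀ y ∈ M, z * y ∈ M := by
    induction hz using Algebra.adjoin_induction with
    | mem x hx => exact hmul x hx
    | algebraMap r => intro y hy; rw [← Algebra.smul_def]; exact M.smul_mem r hy
    | add x w _ _ hx hw => intro y hy; rw [add_mul]; exact M.add_mem (hx y hy) (hw y hy)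
    | mul x w _ _ hx hw => intro y hy; rw [mul_assoc]; exact hx _ (hw y hy)
  simpa using hzM 1 h1

theorem Submodule.mul_mem_of_mem_span {R A : Type*} [CommSemiring R] [Semiring A] [Algebra R A]
    {x y : A} {s : Set A} {M : Submodule R A} (h : ∀ z ∈ s, x * z ∈ M) (hy : y ∈ span R s) :
    x * y ∈ M :=
  span_le (p := M.comap (LinearMap.mulLeft R x)) |>.2 h hy

theorem Algebra.adjoin_singleton_smul {K A : Type*} [Field K] [Semiring A] [Algebra K A]
    {r : K} (hr : r ≠ 0) (x : A) :
    Algebra.adjoin K {r • x} = Algebra.adjoin K {x} := by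
  refine le_antisymm (Algebra.adjoin_le ?_) (Algebra.adjoin_le ?_) <;>
    rw [Set.singleton_subset_iff]
  · exact Subalgebra.smul_mem _ (Algebra.self_mem_adjoin_singleton K x) r
  · simpa [hr] using Subalgebra.smul_mem _ (Algebra.self_mem_adjoin_singleton K (r • x)) r⁻¹

theorem Algebra.adjoin_singleton_le_span_pow {K A : Type*} [CommSemiring K] [Semiring A]
    [Algebra K A]
    {p : ℕ} (hp : 1 < p) {x : A} {c : K} (hx : x ^ p = x + algebraMap K A c) :
    Subalgebra.toSubmodule (Algebra.adjoin K {x}) ≤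
      span K (Set.range fun k : Fin p ↦ x ^ (k : ℕ)) := by
  refine Algebra.adjoin_le_of_one_mem_of_mul_mem
    (subset_span ⟨⟨0, by omega⟩, pow_zero x⟩) ?_
  intro z hz y hy
  rw [Set.mem_singleton_iff.1 hz]
  refine mul_mem_of_mem_span ?_ hy
  rintro _ ⟨k, rfl⟩
  rw [← pow_succ']
  by_cases hk : (k : ℕ) + 1 < p
  · exact subset_span ⟨⟨k + 1, hk⟩, rfl⟩
  · rw [show (k : ℕ) + 1 = p by omega, hx, Algebra.algebraMap_eq_smul_one]
    exact add_mem (subset_span ⟨⟨1, hp⟩, pow_one x⟩)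
      (smul_mem _ c (subset_span ⟨⟨0, by omega⟩, pow_zero x⟩))

namespace ArtinSchreier

section exponent

variable {ι : Type*} [DecidableEq ι] {p : ℕ}

def exponentSingle (hp : 1 < p) (j : ι) : ι → Fin p :=
  fun i ↦ if i = j then ⟨1, hp⟩ else ⟨0, by omega⟩

theorem exponentSingle_injective (hp : 1 < p) :
    Function.Injective (exponentSingle (ι := ι) hp) := by
  intro i j h
  simpa [exponentSingle] using congrFun h i

end exponent

section monomial

variable {K L ι : Type*} [CommSemiring K] [CommSemiring L] [Algebra K L] [Fintype ι]
  [DecidableEq ι] {p : ℕ} {α : ι → L}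

def monomial (p : ℕ) (α : ι → L) (e : ι → Fin p) : L := ∏ i, α i ^ (e i : ℕ)

def degree (e : ι → Fin p) : ℕ := ∑ i, (e i : ℕ)

theorem monomial_update (e : ι → Fin p) (j : ι) (k : Fin p) :
    monomial p α (Function.update e j k) = α j ^ (k : ℕ) * ∏ i ∈ univ \ {j}, α i ^ (e i : ℕ) := by
  simp only [monomial, Function.apply_update (fun i (k : Fin p) ↦ α i ^ (k : ℕ)),
    prod_update_of_mem (mem_univ j)]

theorem degree_update_succ (e : ι → Fin p) (j : ι) (h : (e j : ℕ) + 1 < p) :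
    degree (Function.update e j ⟨e j + 1, h⟩) = degree e + 1 := by
  simp only [degree, Function.apply_update (fun _ (k : Fin p) ↦ (k : ℕ)),
    sum_update_of_mem (mem_univ j),
    sum_eq_add_sum_sdiff_singleton_of_mem (mem_univ j) (fun i ↦ (e i : ℕ))]
  ring

theorem mul_monomial_of_lt (e : ι → Fin p) (j : ι) (h : (e j : ℕ) + 1 < p) :
    α j * monomial p α e = monomial p α (Function.update e j ⟨e j + 1, h⟩) := by
  conv_lhs => rw [← Function.update_eq_self j e]
  rw [monomial_update, monomial_update, pow_succ']
  ring

theorem mul_monomial_mem_span {f : ι → K} (hp : 1 < p)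
    (hAS : ∀ i, α i ^ p = α i + algebraMap K L (f i)) (e : ι → Fin p) (j : ι) :
    α j * monomial p α e ∈ span K (Set.range (monomial p α)) := by
  by_cases h : (e j : ℕ) + 1 < p
  · rw [mul_monomial_of_lt e j h]
    exact subset_span ⟨_, rfl⟩
  · have hej : (e j : ℕ) + 1 = p := by omega
    have hsplit : α j * monomial p α e = monomial p α (Function.update e j ⟨1, hp⟩) +
        f j • monomial p α (Function.update e j ⟨0, by omega⟩) := by
      conv_lhs => rw [← Function.update_eq_self j e]
      simp only [monomial_update, Algebra.smul_def]
      rw [← mul_assoc, ← pow_succ', hej, hAS]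
      ring
    rw [hsplit]
    exact add_mem (subset_span ⟨_, rfl⟩) (smul_mem _ _ (subset_span ⟨_, rfl⟩))

theorem adjoin_le_span_monomial {f : ι → K} (hp : 1 < p)
    (hAS : ∀ i, α i ^ p = α i + algebraMap K L (f i)) :
    Subalgebra.toSubmodule (Algebra.adjoin K (Set.range α)) ≤
      span K (Set.range (monomial p α)) := by
  refine Algebra.adjoin_le_of_one_mem_of_mul_mem
    (subset_span ⟨fun _ ↦ ⟨0, by omega⟩, by simp [monomial]⟩) ?_
  rintro _ ⟨j, rfl⟩ y hy
  refine mul_mem_of_mem_span ?_ hy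
  rintro _ ⟨e, rfl⟩
  exact mul_monomial_mem_span hp hAS e j

theorem sum_smul_pow_mem_span_monomial (c : ι → K) {k : ℕ} (hk : k < p) :
    (∑ i, c i • α i) ^ k ∈ span K (monomial p α '' {e | degree e = k}) := by
  induction k with
  | zero => exact subset_span ⟨fun _ ↦ ⟨0, by omega⟩, by simp [degree], by simp [monomial]⟩
  | succ k ih =>
    rw [pow_succ']
    refine mul_mem_of_mem_span ?_ (ih (by omega))
    rintro _ ⟨e, he, rfl⟩
    replace he : degree e = k := he
    rw [sum_mul]
    refine sum_mem fun i _ ↦ ?_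
    have hei : (e i : ℕ) + 1 < p := by
      have : (e i : ℕ) ≤ degree e := single_le_sum (fun j _ ↦ Nat.zero_le (e j : ℕ)) (mem_univ i)
      omega
    rw [smul_mul_assoc, mul_monomial_of_lt e i hei]
    refine smul_mem _ _ (subset_span ⟨_, ?_, rfl⟩)
    rw [Set.mem_ofPred_eq, degree_update_succ, he]

theorem monomial_exponentSingle (hp : 1 < p) (j : ι) :
    monomial p α (exponentSingle hp j) = α j := by
  simp [monomial, exponentSingle, apply_ite]

theorem degree_exponentSingle (hp : 1 < p) (j : ι) : degree (exponentSingle hp j) = 1 := by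
  simp [degree, exponentSingle, apply_ite]

theorem repr_sum_smul_exponentSingle (B : Module.Basis (ι → Fin p) K L) (hB : ⇑B = monomial p α)
    (hp : 1 < p) (c : ι → K) (j : ι) :
    B.repr (∑ i, c i • α i) (exponentSingle hp j) = c j := by
  have hα : ∀ i, α i = B (exponentSingle hp i) := fun i ↦ by rw [hB, monomial_exponentSingle]
  simp only [hα, map_sum, map_smul, B.repr_self]
  simp [Finsupp.single_apply, (exponentSingle_injective hp).eq_iff]

theorem repr_pow_exponentSingle_eq_zero (B : Module.Basis (ι → Fin p) K L)
    (hB : ⇑B = monomial p α) (hp : 1 < p) (c : ι → K) {k : ℕ} (hk : k < p) (hk1 : k ≠ 1) (j : ι) :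
    B.repr ((∑ i, c i • α i) ^ k) (exponentSingle hp j) = 0 := by
  have hmem := sum_smul_pow_mem_span_monomial (α := α) c hk
  rw [← hB, B.mem_span_image] at hmem
  by_contra h
  exact hk1 ((hmem (Finsupp.mem_support_iff.2 h)).symm.trans (degree_exponentSingle hp j))

theorem exists_eq_smul_of_mem_span_pow (B : Module.Basis (ι → Fin p) K L)
    (hB : ⇑B = monomial p α) (hp : 1 < p) (a b : ι → K)
    (hy : ∑ i, b i • α i ∈ span K (Set.range fun k : Fin p ↦ (∑ i, a i • α i) ^ (k : ℕ))) :
    ∃ r : K, b = r • a := by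
  obtain ⟨r, hr⟩ := (mem_span_range_iff_exists_fun K).1 hy
  refine ⟨r ⟨1, hp⟩, funext fun j ↦ ?_⟩
  have hj := congrArg (fun z ↦ B.repr z (exponentSingle hp j)) hr
  simp only [repr_sum_smul_exponentSingle B hB hp b] at hj
  rw [map_sum, Finsupp.finsetSum_apply, Finset.sum_eq_single ⟨1, hp⟩] at hj
  · rw [map_smul, Finsupp.smul_apply, pow_one, repr_sum_smul_exponentSingle B hB hp,
      smul_eq_mul] at hj
    exact hj.symm
  · intro k _ hk
    rw [map_smul, Finsupp.smul_apply,
      repr_pow_exponentSingle_eq_zero B hB hp a k.isLt (fun h ↦ hk (Fin.ext h)), smul_zero]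
  · simp

end monomial

variable {K L ι : Type*} [Fintype ι] {p : ℕ} [Fact p.Prime] {α : ι → L} {f : ι → K}

theorem sum_smul_pow_char [CommSemiring K] [CommSemiring L] [Algebra K L] [CharP L p]
    (hAS : ∀ i, α i ^ p = α i + algebraMap K L (f i)) {a : ι → K} (ha : ∀ i, a i ^ p = a i) :
    (∑ i, a i • α i) ^ p = ∑ i, a i • α i + algebraMap K L (∑ i, a i * f i) := by
  rw [sum_pow_char, map_sum, ← sum_add_distrib]
  refine sum_congr rfl fun i _ ↦ ?_
  rw [smul_pow, ha, hAS, smul_add, map_mul, Algebra.smul_def (a i) (algebraMap K L (f i))]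

theorem exists_eq_smul_of_mem_adjoin [DecidableEq ι] [Field K] [Field L] [Algebra K L] [CharP K p]
    (hAS : ∀ i, α i ^ p = α i + algebraMap K L (f i)) (hgen : Algebra.adjoin K (Set.range α) = ⊤)
    (hdeg : Module.finrank K L = p ^ Fintype.card ι) {a b : ι → K} (ha : ∀ i, a i ^ p = a i)
    (hy : ∑ i, b i • α i ∈ Algebra.adjoin K {∑ i, a i • α i}) : ∃ r : K, b = r • a := by
  have hp : 1 < p := (Fact.out : p.Prime).one_lt
  have : CharP L p := charP_of_injective_algebraMap (algebraMap K L).injective p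
  have hspan : ⊤ ≤ span K (Set.range (monomial p α)) := by
    simpa [hgen] using adjoin_le_span_monomial hp hAS
  let B := basisOfTopLeSpanOfCardEqFinrank (monomial p α) hspan (by simp [hdeg])
  refine exists_eq_smul_of_mem_span_pow B (coe_basisOfTopLeSpanOfCardEqFinrank ..) hp a b ?_
  exact Algebra.adjoin_singleton_le_span_pow hp (sum_smul_pow_char hAS ha) hy

end ArtinSchreier

theorem RingHom.exists_eq_smul_of_comp_eq_smul {F K ι : Type*} [Field F] [Field K]
    (φ : F →+* K) {a b : ι → F} (hb : b ≠ 0) {r : K} (h : φ ∘ a = r • (φ ∘ b)) :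
    ∃ c : F, a = c • b := by
  obtain ⟨j, hj⟩ := Function.ne_iff.1 hb
  have hrj : φ (a j) = r * φ (b j) := congrFun h j
  have hr : r = φ (a j / b j) := by
    rw [map_div₀, hrj, mul_div_cancel_right₀ _ ((map_ne_zero φ).2 hj)]
  refine ⟨a j / b j, funext fun i ↦ φ.injective ?_⟩
  simpa [hr] using congrFun h i

/-- For an AS-basis `α_1,…,α_n` (with `α_i^p - α_i = f_i ∈ K`, `[K(α):K] = p^n`)
and nonzero tuples `a, b ∈ 𝔽_p^n`, one has
`K(Σ a_i α_i) = K(Σ b_i α_i)` iff `a = c • b` for some `c ∈ 𝔽_p`. -/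
theorem stmt3 (p : ℕ) [Fact p.Prime] {K L : Type*} [Field K] [Field L]
    [Algebra K L] [CharP K p] (n : ℕ) (α : Fin n → L) (f : Fin n → K)
    (hAS : ∀ i, α i ^ p - α i = algebraMap K L (f i))
    (hgen : Algebra.adjoin K (Set.range α) = ⊤)
    (hdeg : Module.finrank K L = p ^ n)
    (a b : Fin n → ZMod p) (ha : a ≠ 0) (hb : b ≠ 0) :
    Algebra.adjoin K {(∑ i, (a i).val • α i : L)} =
      Algebra.adjoin K {(∑ i, (b i).val • α i : L)} ↔
    ∃ c : ZMod p, a = c • b := by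
  let φ := ZMod.castHom (dvd_refl p) K
  have hcast (v : Fin n → ZMod p) : ∑ i, (v i).val • α i = ∑ i, φ (v i) • α i := by
    simp [φ, ← Nat.cast_smul_eq_nsmul K]
  have hfermat (v : ZMod p) : φ v ^ p = φ v := by rw [← map_pow, ZMod.pow_card]
  have hAS' (i : Fin n) : α i ^ p = α i + algebraMap K L (f i) := sub_eq_iff_eq_add'.1 (hAS i)
  simp only [hcast]
  constructor
  · intro h
    obtain ⟨r, hr⟩ := ArtinSchreier.exists_eq_smul_of_mem_adjoin hAS' hgen (by simpa using hdeg)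
      (fun i ↦ hfermat (b i)) (h ▸ Algebra.self_mem_adjoin_singleton K _)
    exact φ.exists_eq_smul_of_comp_eq_smul hb hr
  · rintro ⟨c, rfl⟩
    have hc : φ c ≠ 0 := (map_ne_zero φ).2 (by rintro rfl; exact ha (zero_smul _ b))
    simp only [Pi.smul_apply, smul_eq_mul, map_mul, mul_smul, ← smul_sum]
    exact Algebra.adjoin_singleton_smul hc _
end

section
/- Let K be a complete discrete valuation field of characteristic p and L/K a p^2-cyclic Artin-Schreier-Witt extension given by (a_0^p, a_1^p) -_w (a_0, a_1) = (α_0, α_1) ∈ W_2(K). If (β_0, β_1) ∈ W_2(K) satisfies β_0 = c^{-1} α_0 for nonzero c ∈ F_p and corresponds to (b_0, b_1) with a_0 = c b_0, then (a_1 - c b_1)^p - (a_1 - c b_1) = α_1 - c β_1; in particular K(a_1 - c b_1)/K is a p-cyclic (or trivial) Artin-Schreier extension. -/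
/-!
In `W(L)` write `t` for the Teichmüller lift of `c`; since `c ^ p = c`, `t` is fixed by
Frobenius and multiplies the first two Witt coordinates by `c`. Hence `D := A - t * B` has
zeroth coordinate `0` and first coordinate `d = a₁ - c b₁`, and
`F D - D = (F A - A) - t (F B - B)`. Comparing first coordinates gives
`d ^ p - d = α₁ - c β₁`: for Witt vectors with equal zeroth coordinates, the first coordinate
of their difference is the difference of the first coordinates.
-/

namespace WittVector

variable {p : ℕ} [Fact p.Prime] {R : Type*} [CommRing R]

theorem sub_coeff_zero (x y : WittVector p R) : (x - y).coeff 0 = x.coeff 0 - y.coeff 0 :=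
  map_sub (constantCoeff (p := p) (R := R)) x y

theorem teichmuller_add_verschiebung_shift (x : WittVector p R) :
    teichmuller p (x.coeff 0) + verschiebung (x.shift 1) = x := by
  ext n
  rw [coeff_add_of_disjoint]
  · rcases n with _ | n
    · simp [teichmuller_coeff_zero, verschiebung_coeff_zero]
    · simp [teichmuller_coeff_pos, verschiebung_coeff_succ, shift_coeff, add_comm]
  · rintro (_ | n)
    · exact Or.inr (verschiebung_coeff_zero _)
    · exact Or.inl (teichmuller_coeff_pos p _ _ n.succ_pos)

theorem teichmuller_add_verschiebung_coeff_one (r : R) (y : WittVector p R) :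
    (teichmuller p r + verschiebung y).coeff 1 = y.coeff 0 := by
  rw [coeff_add_of_disjoint, teichmuller_coeff_pos p r 1 one_pos, verschiebung_coeff_succ,
    zero_add]
  rintro (_ | n)
  · exact Or.inr (verschiebung_coeff_zero _)
  · exact Or.inl (teichmuller_coeff_pos p _ _ n.succ_pos)

theorem sub_coeff_one_of_coeff_zero_eq {x y : WittVector p R} (h : x.coeff 0 = y.coeff 0) :
    (x - y).coeff 1 = x.coeff 1 - y.coeff 1 := by
  conv_lhs => rw [← teichmuller_add_verschiebung_shift x,
    ← teichmuller_add_verschiebung_shift y, h, add_sub_add_left_eq_sub, ← map_sub, verschiebung_coeff_succ, sub_coeff_zero]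
  simp only [shift_coeff]

variable [CharP R p]

theorem frobenius_teichmuller (r : R) : frobenius (teichmuller p r) = teichmuller p (r ^ p) := by
  rw [frobenius_eq_map_frobenius, map_teichmuller, frobenius_def]

theorem teichmuller_mul_coeff_one (r : R) (x : WittVector p R) :
    (teichmuller p r * x).coeff 1 = r ^ p * x.coeff 1 := by
  conv_lhs => rw [← teichmuller_add_verschiebung_shift x, mul_add, ← map_mul,
    mul_comm (teichmuller p r), ← verschiebung_mul_frobenius]
  rw [frobenius_teichmuller, teichmuller_add_verschiebung_coeff_one, mul_coeff_zero,
    teichmuller_coeff_zero, shift_coeff, mul_comm]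

theorem frobenius_sub_self_coeff_one_sub_mul (x y : WittVector p R) {r : R} (hr : r ^ p = r)
    (h0 : x.coeff 0 = r * y.coeff 0) :
    (frobenius x - x).coeff 1 - r * (frobenius y - y).coeff 1 =
      (x.coeff 1 - r * y.coeff 1) ^ p - (x.coeff 1 - r * y.coeff 1) := by
  set t := teichmuller p r
  have ht : frobenius t = t := by rw [frobenius_teichmuller, hr]
  have ht0 (z : WittVector p R) : (t * z).coeff 0 = r * z.coeff 0 := by
    rw [mul_coeff_zero, teichmuller_coeff_zero]
  have ht1 (z : WittVector p R) : (t * z).coeff 1 = r * z.coeff 1 := by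
    rw [teichmuller_mul_coeff_one, hr]
  set d := x - t * y
  have hd0 : d.coeff 0 = 0 := by rw [sub_coeff_zero, ht0, h0, sub_self]
  have hd1 : d.coeff 1 = x.coeff 1 - r * y.coeff 1 := by
    rw [sub_coeff_one_of_coeff_zero_eq (by rw [ht0, h0]), ht1]
  have hFd : frobenius d - d = (frobenius x - x) - t * (frobenius y - y) := by
    simp only [d, map_sub, map_mul, ht]
    ring
  calc (frobenius x - x).coeff 1 - r * (frobenius y - y).coeff 1
      = ((frobenius x - x) - t * (frobenius y - y)).coeff 1 := by
        have h0' : (frobenius x - x).coeff 0 = (t * (frobenius y - y)).coeff 0 := by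
          rw [ht0, sub_coeff_zero, sub_coeff_zero, coeff_frobenius_charP, coeff_frobenius_charP,
            h0, mul_pow, hr, mul_sub]
        rw [sub_coeff_one_of_coeff_zero_eq h0', ht1]
    _ = (frobenius d - d).coeff 1 := by rw [hFd]
    _ = d.coeff 1 ^ p - d.coeff 1 := by
        have hFd0 : (frobenius d).coeff 0 = d.coeff 0 := by
          rw [coeff_frobenius_charP, hd0, zero_pow (Fact.out : p.Prime).ne_zero]
        rw [sub_coeff_one_of_coeff_zero_eq hFd0, coeff_frobenius_charP]
    _ = _ := by rw [hd1]

theorem truncate_frobenius_out_mk {n : ℕ} (v : Fin n → R) :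
    truncate n (frobenius (TruncatedWittVector.mk p v).out) =
      TruncatedWittVector.mk p fun i => v i ^ p := by
  ext i
  simp [coeff_frobenius_charP]

theorem frobenius_out_sub_out_coeff {n : ℕ} {v w : Fin n → R}
    (h : TruncatedWittVector.mk p (fun i => v i ^ p) - TruncatedWittVector.mk p v =
      TruncatedWittVector.mk p w) (i : Fin n) :
    (frobenius (TruncatedWittVector.mk p v).out - (TruncatedWittVector.mk p v).out).coeff i =
      w i := by
  have hout : truncate n (TruncatedWittVector.mk p v).out = TruncatedWittVector.mk p v :=
    TruncatedWittVector.truncateFun_out _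
  rw [← coeff_truncate, map_sub, truncate_frobenius_out_mk, hout, h, TruncatedWittVector.coeff_mk]

end WittVector

open WittVector

theorem stmt16_general (p : ℕ) [Fact p.Prime] {K L : Type*} [Field K] [Field L]
    [Algebra K L] [CharP K p]
    (a0 a1 b0 b1 : L) (α0 α1 β0 β1 : K) (c : ZMod p)
    (hA : TruncatedWittVector.mk p ![a0 ^ p, a1 ^ p] -
        TruncatedWittVector.mk p ![a0, a1] =
        TruncatedWittVector.mk p ![algebraMap K L α0, algebraMap K L α1])
    (hB : TruncatedWittVector.mk p ![b0 ^ p, b1 ^ p] -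
        TruncatedWittVector.mk p ![b0, b1] =
        TruncatedWittVector.mk p ![algebraMap K L β0, algebraMap K L β1])
    (hab : a0 = (c.val : L) * b0) :
    (a1 - (c.val : L) * b1) ^ p - (a1 - (c.val : L) * b1) =
      algebraMap K L (α1 - (c.val : K) * β1) := by
  have : CharP L p := charP_of_injective_algebraMap (algebraMap K L).injective p
  have hpow (u v : L) : ![u ^ p, v ^ p] = fun i => ![u, v] i ^ p := by
    ext i; fin_cases i <;> rfl
  rw [hpow] at hA hB
  -- the coordinates of `A` and `B` are `a0, a1` and `b0, b1` definitionally
  set A := (TruncatedWittVector.mk p ![a0, a1]).out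
  set B := (TruncatedWittVector.mk p ![b0, b1]).out
  have hα : (frobenius A - A).coeff 1 = algebraMap K L α1 := frobenius_out_sub_out_coeff hA 1
  have hβ : (frobenius B - B).coeff 1 = algebraMap K L β1 := frobenius_out_sub_out_coeff hB 1
  have hc : (c.val : L) ^ p = c.val := by rw [← frobenius_def, map_natCast]
  have hd := frobenius_sub_self_coeff_one_sub_mul A B hc hab
  rw [hα, hβ] at hd
  rw [map_sub, map_mul, map_natCast]
  exact hd.symm

/-- Witt vector computation: if `(a_0^p,a_1^p) -_w (a_0,a_1) = (α_0,α_1)` and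
`(b_0^p,b_1^p) -_w (b_0,b_1) = (β_0,β_1)` in `W_2`, with `β_0 = c⁻¹ α_0`
(i.e. `c β_0 = α_0`) and `a_0 = c b_0` for nonzero `c ∈ 𝔽_p`, then
`(a_1 - c b_1)^p - (a_1 - c b_1) = α_1 - c β_1`, so `K(a_1 - c b_1)/K` is a
`p`-cyclic (or trivial) Artin–Schreier extension. -/
theorem stmt16 (p : ℕ) [Fact p.Prime] {K L : Type*} [Field K] [Field L]
    [Algebra K L] [CharP K p]
    (a0 a1 b0 b1 : L) (α0 α1 β0 β1 : K) (c : ZMod p) (hc : c ≠ 0)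
    (hA : TruncatedWittVector.mk p ![a0 ^ p, a1 ^ p] -
        TruncatedWittVector.mk p ![a0, a1] =
        TruncatedWittVector.mk p ![algebraMap K L α0, algebraMap K L α1])
    (hB : TruncatedWittVector.mk p ![b0 ^ p, b1 ^ p] -
        TruncatedWittVector.mk p ![b0, b1] =
        TruncatedWittVector.mk p ![algebraMap K L β0, algebraMap K L β1])
    (hβ0 : (c.val : K) * β0 = α0)
    (hab : a0 = (c.val : L) * b0) :
    (a1 - (c.val : L) * b1) ^ p - (a1 - (c.val : L) * b1) =
      algebraMap K L (α1 - (c.val : K) * β1) :=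
  stmt16_general p a0 a1 b0 b1 α0 α1 β0 β1 c hA hB hab
end
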